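/- Let λ = (λ_1 > ⋯ > λ_ℓ > 0) be a strict partition, let x ∈ X(λ), and let μ = λ+□(x), of length ℓ'. Then the following identity of polynomials in one variable v holds: ∏_{i=1}^{ℓ'} (v − μ_i(μ_i−1)) · ∏_{i=1}^{ℓ} (v − λ_i(λ_i+1)) · ((v − x(x+1))² − 2(v + x(x+1))) = ∏_{i=1}^{ℓ'} (v − μ_i(μ_i+1)) · ∏_{i=1}^{ℓ} (v − λ_i(λ_i−1)) · (v − x(x+1))². Equivalently, for Φ(v;λ) = ∏_i (v − λ_i(λ_i−1))/(v − λ_i(λ_i+1)) one has Φ(v; λ+□(x))/Φ(v;λ) = (v − x(x+1))² / ((v − x(x+1))² − 2(v + x(x+1))); by symmetry, for y ∈ Y(λ), Φ(v; λ−□(y))/Φ(v;λ) = ((v − y(y+1))² − 2(v + y(y+1))) / (v − y(y+1))². -/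

import Mathlib

open Finset

/-- A strict partition is encoded as the finite set of its (distinct, positive) parts:
`S` is a strict partition iff `0 ∉ S`. -/
def IsStrictPartition (S : Finset ℕ) : Prop := 0 ∉ S

/-- The weight `|λ|` of a strict partition: the sum of its parts. -/
def wt (S : Finset ℕ) : ℕ := ∑ a ∈ S, a

/-- The length `ℓ(λ)` of a strict partition: its number of parts. -/
def len (S : Finset ℕ) : ℕ := S.card

/-- The set `X(λ)` of addable contents of the strict partition `λ`:
the contents `x` of boxes that can be added to the shifted Young diagram.
A part `a ∈ S` gives the addable content `a` iff `a + 1` is not a part, and `0` is an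
addable content iff `1` is not a part (i.e. `λ` is empty or its smallest part is `≥ 2`). -/
def Xset (S : Finset ℕ) : Finset ℕ :=
  (S.filter (fun x => x + 1 ∉ S)) ∪ (if 1 ∉ S then {0} else ∅)

/-- The set `Y(λ)` of removable contents of the strict partition `λ`:
`y ∈ Y(λ)` iff `y + 1` is a part and `y` is not a part. -/
def Yset (S : Finset ℕ) : Finset ℕ :=
  (S.filter (fun p => p - 1 ∉ S)).image (fun p => p - 1)

/-- `λ + □(x)`: add to `λ` the box of content `x ∈ X(λ)`. -/
def addBox (S : Finset ℕ) (x : ℕ) : Finset ℕ :=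
  if x = 0 then insert 1 S else insert (x + 1) (S.erase x)

/-- `λ − □(y)`: remove from `λ` the box of content `y ∈ Y(λ)`. -/
def removeBox (S : Finset ℕ) (y : ℕ) : Finset ℕ :=
  if y = 0 then S.erase 1 else insert y (S.erase (y + 1))

/-- `c(c+1)` as a real number. -/
def cc (t : ℕ) : ℝ := t * (t + 1)

/-- The number `h(λ)` of standard shifted tableaux (with the doubled-edge convention):
`h(λ) = 2^{|λ|−ℓ(λ)} |λ|!/(λ_1!⋯λ_ℓ!) ∏_{i<j} (λ_i−λ_j)/(λ_i+λ_j)`. -/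
noncomputable def hfun (S : Finset ℕ) : ℝ :=
  2 ^ (wt S - len S) * (Nat.factorial (wt S) : ℝ) / (∏ a ∈ S, (Nat.factorial a : ℝ)) *
    ∏ p ∈ S.offDiag.filter (fun p => p.2 < p.1), (((p.1 : ℝ) - p.2) / ((p.1 : ℝ) + p.2))

/-- The partial fraction coefficients `θ↑_x(λ)`, `x ∈ X(λ)`. -/
noncomputable def thetaUp (S : Finset ℕ) (xh : ℕ) : ℝ :=
  if xh = 0 then (∏ y ∈ Yset S, cc y) / (∏ x ∈ (Xset S).erase 0, cc x)
  else (∏ y ∈ Yset S, (cc xh - cc y)) /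
    (cc xh * ∏ x ∈ ((Xset S).erase 0).erase xh, (cc xh - cc x))

/-- The partial fraction coefficients `θ↓_y(λ)`, `y ∈ Y(λ)`. -/
noncomputable def thetaDown (S : Finset ℕ) (yh : ℕ) : ℝ :=
  (∏ x ∈ (Xset S).erase 0, (cc yh - cc x)) / (∏ y ∈ (Yset S).erase yh, (cc yh - cc y))

/-- `Z_α(n) = α(α+2)⋯(α+2n−2)`. -/
noncomputable def Zfun (α : ℝ) (n : ℕ) : ℝ := ∏ k ∈ Finset.range n, (α + 2 * k)

/-- The multiplicative measure weight
`M_n^α(λ) = (h(λ)² 2^{ℓ−n}/n!) ⬝ ∏_{□∈λ}(c(□)(c(□)+1)+α) / Z_α(n)`. -/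
noncomputable def Mw (α : ℝ) (n : ℕ) (S : Finset ℕ) : ℝ :=
  hfun S ^ 2 * 2 ^ len S / 2 ^ n / (Nat.factorial n : ℝ) *
    (∏ p ∈ S, ∏ c ∈ Finset.range p, (cc c + α)) / Zfun α n

/-!
Writing `Φ(v;λ) = ∏ φ(λᵢ)` with `φ(a) = (v − a(a−1))/(v − a(a+1))`, adding the box of content
`x ≠ 0` replaces the part `x` by `x + 1`, removing the box of content `y ≠ 0` replaces the part
`y + 1` by `y`, and the box of content `0` is the part `1`. So a single factor of `Φ` changes,
and since `(x+1)x = x(x+1)` the ratio reduces to the identity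
`(v − (x+1)(x+2)) (v − x(x−1)) = (v − x(x+1))² − 2(v + x(x+1))`.
-/

section ProdCross

variable {ι R : Type*} [DecidableEq ι] [CommMonoid R] {f g : ι → R} {S T : Finset ι} {a b : ι}
  {p q : R}

theorem prod_insert_mul_prod_mul_eq (hb : b ∉ T) (h : f b * p = g b * q) :
    (∏ i ∈ insert b T, f i) * (∏ i ∈ T, g i) * p =
      (∏ i ∈ insert b T, g i) * (∏ i ∈ T, f i) * q := by
  rw [prod_insert hb, prod_insert hb]
  calc f b * (∏ i ∈ T, f i) * (∏ i ∈ T, g i) * p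
      = (∏ i ∈ T, f i) * (∏ i ∈ T, g i) * (f b * p) := by ac_rfl
    _ = (∏ i ∈ T, f i) * (∏ i ∈ T, g i) * (g b * q) := by rw [h]
    _ = g b * (∏ i ∈ T, g i) * (∏ i ∈ T, f i) * q := by ac_rfl

theorem prod_insert_erase_mul_prod_mul_eq (ha : a ∈ S) (hb : b ∉ S.erase a)
    (h : f b * (g a * p) = g b * (f a * q)) :
    (∏ i ∈ insert b (S.erase a), f i) * (∏ i ∈ S, g i) * p =
      (∏ i ∈ insert b (S.erase a), g i) * (∏ i ∈ S, f i) * q := by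
  rw [← mul_prod_erase S g ha, ← mul_prod_erase S f ha]
  calc (∏ i ∈ insert b (S.erase a), f i) * (g a * ∏ i ∈ S.erase a, g i) * p
      = (∏ i ∈ insert b (S.erase a), f i) * (∏ i ∈ S.erase a, g i) * (g a * p) := by ac_rfl
    _ = (∏ i ∈ insert b (S.erase a), g i) * (∏ i ∈ S.erase a, f i) * (f a * q) :=
      prod_insert_mul_prod_mul_eq hb h
    _ = (∏ i ∈ insert b (S.erase a), g i) * (f a * ∏ i ∈ S.erase a, f i) * q := by ac_rfl

end ProdCross

theorem mem_Xset {S : Finset ℕ} {x : ℕ} : x ∈ Xset S ↔ x ∈ S ∧ x + 1 ∉ S ∨ x = 0 ∧ 1 ∉ S := by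
  by_cases h1 : 1 ∈ S <;> simp [Xset, h1, or_comm]

theorem mem_Yset {S : Finset ℕ} {y : ℕ} : y ∈ Yset S ↔ y + 1 ∈ S ∧ y ∉ S := by
  simp only [Yset, mem_image, mem_filter]
  constructor
  · rintro ⟨p, ⟨hp, hp1⟩, rfl⟩
    obtain _ | p := p
    · exact absurd hp hp1
    · exact ⟨hp, hp1⟩
  · rintro ⟨hy1, hy⟩
    exact ⟨y + 1, ⟨hy1, hy⟩, rfl⟩

theorem natCast_succ_mul_natCast_succ_sub_one (x : ℕ) :
    ((x + 1 : ℕ) : ℝ) * (((x + 1 : ℕ) : ℝ) - 1) = cc x := by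
  simp only [cc]; push_cast; ring

theorem sub_cc_succ_mul_sub_mul_sub_one (v : ℝ) (x : ℕ) :
    (v - cc (x + 1)) * (v - (x : ℝ) * ((x : ℝ) - 1)) = (v - cc x) ^ 2 - 2 * (v + cc x) := by
  simp only [cc]; push_cast; ring

theorem addBox_identity {S : Finset ℕ} {x : ℕ} (hx : x ∈ Xset S) (v : ℝ) :
    (∏ a ∈ addBox S x, (v - (a : ℝ) * ((a : ℝ) - 1))) * (∏ a ∈ S, (v - cc a)) *
        ((v - cc x) ^ 2 - 2 * (v + cc x)) =
      (∏ a ∈ addBox S x, (v - cc a)) * (∏ a ∈ S, (v - (a : ℝ) * ((a : ℝ) - 1))) *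
        (v - cc x) ^ 2 := by
  rcases eq_or_ne x 0 with rfl | hx0
  · have h1 : 1 ∉ S := by rcases mem_Xset.1 hx with ⟨-, h⟩ | ⟨-, h⟩ <;> exact h
    rw [addBox, if_pos rfl]
    refine prod_insert_mul_prod_mul_eq h1 ?_
    simp only [cc]; push_cast; ring
  · obtain ⟨hxS, hx1⟩ : x ∈ S ∧ x + 1 ∉ S := (mem_Xset.1 hx).resolve_right (hx0 ·.1)
    rw [addBox, if_neg hx0]
    refine prod_insert_erase_mul_prod_mul_eq hxS (fun h => hx1 (mem_of_mem_erase h)) ?_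
    rw [natCast_succ_mul_natCast_succ_sub_one]
    linear_combination -(v - cc x) ^ 2 * sub_cc_succ_mul_sub_mul_sub_one v x

theorem removeBox_identity {S : Finset ℕ} {y : ℕ} (hy : y ∈ Yset S) (v : ℝ) :
    (∏ a ∈ removeBox S y, (v - (a : ℝ) * ((a : ℝ) - 1))) * (∏ a ∈ S, (v - cc a)) *
        (v - cc y) ^ 2 =
      (∏ a ∈ removeBox S y, (v - cc a)) * (∏ a ∈ S, (v - (a : ℝ) * ((a : ℝ) - 1))) *
        ((v - cc y) ^ 2 - 2 * (v + cc y)) := by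
  obtain ⟨hy1, hyS⟩ := mem_Yset.1 hy
  rcases eq_or_ne y 0 with rfl | hy0
  · rw [removeBox, if_pos rfl, ← mul_prod_erase S _ hy1, ← mul_prod_erase S _ hy1]
    simp only [cc]; push_cast; ring
  · rw [removeBox, if_neg hy0]
    refine prod_insert_erase_mul_prod_mul_eq hy1 (fun h => hyS (mem_of_mem_erase h)) ?_
    rw [natCast_succ_mul_natCast_succ_sub_one]
    linear_combination (v - cc y) ^ 2 * sub_cc_succ_mul_sub_mul_sub_one v y

theorem phi_ratio_general (S : Finset ℕ) (v : ℝ) :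
    (∀ x ∈ Xset S,
      (∏ a ∈ addBox S x, (v - (a : ℝ) * ((a : ℝ) - 1))) * (∏ a ∈ S, (v - cc a)) *
          ((v - cc x) ^ 2 - 2 * (v + cc x)) =
        (∏ a ∈ addBox S x, (v - cc a)) * (∏ a ∈ S, (v - (a : ℝ) * ((a : ℝ) - 1))) *
          (v - cc x) ^ 2) ∧
    (∀ y ∈ Yset S,
      (∏ a ∈ removeBox S y, (v - (a : ℝ) * ((a : ℝ) - 1))) * (∏ a ∈ S, (v - cc a)) *
          (v - cc y) ^ 2 =
        (∏ a ∈ removeBox S y, (v - cc a)) * (∏ a ∈ S, (v - (a : ℝ) * ((a : ℝ) - 1))) *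
          ((v - cc y) ^ 2 - 2 * (v + cc y))) :=
  ⟨fun _ hx => addBox_identity hx v, fun _ hy => removeBox_identity hy v⟩

/-- **Lemma 3.8.** For a strict partition `λ`, `x ∈ X(λ)` and `y ∈ Y(λ)`, as polynomial
identities in `v` (with `Φ(v;λ) = ∏_i (v − λ_i(λ_i−1))/(v − λ_i(λ_i+1))`):
`Φ(v;λ+□(x))/Φ(v;λ) = (v−x(x+1))² / ((v−x(x+1))² − 2(v+x(x+1)))` and
`Φ(v;λ−□(y))/Φ(v;λ) = ((v−y(y+1))² − 2(v+y(y+1))) / (v−y(y+1))²`,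
stated in cross-multiplied (polynomial) form. -/
theorem phi_ratio (S : Finset ℕ) (hS : IsStrictPartition S) (v : ℝ) :
    (∀ x ∈ Xset S,
      (∏ a ∈ addBox S x, (v - (a : ℝ) * ((a : ℝ) - 1))) * (∏ a ∈ S, (v - cc a)) *
          ((v - cc x) ^ 2 - 2 * (v + cc x)) =
        (∏ a ∈ addBox S x, (v - cc a)) * (∏ a ∈ S, (v - (a : ℝ) * ((a : ℝ) - 1))) *
          (v - cc x) ^ 2) ∧
    (∀ y ∈ Yset S,
      (∏ a ∈ removeBox S y, (v - (a : ℝ) * ((a : ℝ) - 1))) * (∏ a ∈ S, (v - cc a)) *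
          (v - cc y) ^ 2 =
        (∏ a ∈ removeBox S y, (v - cc a)) * (∏ a ∈ S, (v - (a : ℝ) * ((a : ℝ) - 1))) *
          ((v - cc y) ^ 2 - 2 * (v + cc y))) :=
  phi_ratio_general S v
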